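/- arXiv:1611.02983 — 11 statements merged into one kernel-verified Lean document; each statement's English description precedes it below -/
import Mathlib

section
/- Fix integers c ≥ 0 and b ≥ 2. If a positive integer a is a multiple of b, then a is a fixed point of S_{[c,b]} if and only if a + 1 is a fixed point of S_{[c,b]}. -/
/-- The augmented generalized happy function: `c` plus the sum of the squares
of the base-`b` digits of `a`. -/
def S (c b a : ℕ) : ℕ := c + ((Nat.digits b a).map (· ^ 2)).sum

/-! Both `S c b (b * k)` and `S c b (b * k + 1) - 1` equal `S c b k`, so either fixed-point
equation says `S c b k = b * k`. -/

theorem S_add_mul {c b d k : ℕ} (hb : 1 < b) (hd : d < b) (hdk : d ≠ 0 ∨ k ≠ 0) :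
    S c b (d + b * k) = S c b k + d ^ 2 := by
  simp only [S, Nat.digits_add b hb d k hd hdk, List.map_cons, List.sum_cons]
  ring

theorem stmt_0 (c b : ℕ) (hb : 2 ≤ b) (a : ℕ) (ha : 0 < a) (hdvd : b ∣ a) :
    S c b a = a ↔ S c b (a + 1) = a + 1 := by
  obtain ⟨k, rfl⟩ := hdvd
  have hk : k ≠ 0 := by rintro rfl; simp at ha
  have h₀ : S c b (b * k) = S c b k := by
    simpa using S_add_mul (c := c) hb (by omega : 0 < b) (Or.inr hk)
  have h₁ : S c b (b * k + 1) = S c b k + 1 := by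
    simpa [add_comm] using S_add_mul (c := c) hb (by omega : 1 < b) (Or.inl one_ne_zero)
  rw [h₀, h₁]
  omega
end

section
/- Fix integers c ≥ 0 and b ≥ 2. If a and a + 1 are both fixed points of S_{[c,b]} (with a a positive integer), then a is a multiple of b. -/
def digitSqSum (b n : ℕ) : ℕ := ((Nat.digits b n).map (· ^ 2)).sum

lemma S_eq_add_digitSqSum (c b a : ℕ) : S c b a = c + digitSqSum b a := rfl

lemma digitSqSum_add_mul {b r : ℕ} (hb : 2 ≤ b) (hr : r < b) (q : ℕ) :
    digitSqSum b (r + b * q) = r ^ 2 + digitSqSum b q := by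
  by_cases hzero : r = 0 ∧ q = 0
  · obtain ⟨rfl, rfl⟩ := hzero
    simp [digitSqSum]
  · rw [digitSqSum, Nat.digits_add b hb r q hr (by omega)]
    simp [digitSqSum]

lemma digitSqSum_add_mul_succ {b r : ℕ} (hb : 2 ≤ b) (hr : r + 1 < b) (q : ℕ) :
    digitSqSum b (r + b * q + 1) = (r + 1) ^ 2 + digitSqSum b q := by
  rw [show r + b * q + 1 = (r + 1) + b * q by ring, digitSqSum_add_mul hb hr]

lemma digitSqSum_pred_add_mul_succ {b : ℕ} (hb : 2 ≤ b) (q : ℕ) :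
    digitSqSum b (b - 1 + b * q + 1) = digitSqSum b (q + 1) := by
  rw [show b - 1 + b * q + 1 = 0 + b * (q + 1) by rw [mul_add]; omega,
    digitSqSum_add_mul hb (by omega), zero_pow two_ne_zero, zero_add]

lemma digitSqSum_succ_add_three_le {b : ℕ} (hb : 2 ≤ b) (n : ℕ) :
    digitSqSum b (n + 1) + 3 ≤ digitSqSum b n + 2 * b := by
  induction n using Nat.strong_induction_on with
  | _ n ih =>
    obtain ⟨q, r, hr, rfl⟩ : ∃ q r, r < b ∧ n = r + b * q :=
      ⟨n / b, n % b, Nat.mod_lt _ (by omega), (Nat.mod_add_div n b).symm⟩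
    rw [digitSqSum_add_mul hb hr]
    by_cases hlast : r + 1 < b
    · rw [digitSqSum_add_mul_succ hb hlast]
      nlinarith
    · obtain rfl : r = b - 1 := by omega
      rw [digitSqSum_pred_add_mul_succ hb]
      have := ih q (by nlinarith)
      nlinarith

theorem dvd_of_digitSqSum_succ_eq {b a : ℕ} (hb : 2 ≤ b)
    (h : digitSqSum b (a + 1) = digitSqSum b a + 1) : b ∣ a := by
  obtain ⟨q, r, hr, rfl⟩ : ∃ q r, r < b ∧ a = r + b * q :=
    ⟨a / b, a % b, Nat.mod_lt _ (by omega), (Nat.mod_add_div a b).symm⟩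
  rw [digitSqSum_add_mul hb hr] at h
  by_cases hlast : r + 1 < b
  · rw [digitSqSum_add_mul_succ hb hlast] at h
    obtain rfl : r = 0 := by nlinarith
    simp
  · obtain rfl : r = b - 1 := by omega
    rw [digitSqSum_pred_add_mul_succ hb] at h
    have := digitSqSum_succ_add_three_le hb q
    nlinarith

theorem stmt_1_general (c b : ℕ) (hb : 2 ≤ b) (a : ℕ)
    (h1 : S c b a = a) (h2 : S c b (a + 1) = a + 1) : b ∣ a := by
  rw [S_eq_add_digitSqSum] at h1 h2
  exact dvd_of_digitSqSum_succ_eq hb (by omega)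

theorem stmt_1 (c b : ℕ) (hb : 2 ≤ b) (a : ℕ) (ha : 0 < a)
    (h1 : S c b a = a) (h2 : S c b (a + 1) = a + 1) : b ∣ a :=
  stmt_1_general c b hb a h1 h2
end

section
/- Fix integers c ≥ 0 and b ≥ 2. Let a be a positive integer whose base-b digit in position 1 (the coefficient a_1 of b^1) is nonzero. Let ã = (a - a_1·b) + (b - a_1)·b, i.e., the number obtained from a by replacing the digit a_1 with b - a_1. Then a is a fixed point of S_{[c,b]} if and only if ã is a fixed point of S_{[c,b]}. -/
section

variable {c b : ℕ}

theorem S_eq_mod_sq_add (hb : 1 < b) (n : ℕ) : S c b n = (n % b) ^ 2 + S c b (n / b) := by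
  rcases Nat.eq_zero_or_pos n with rfl | hn
  · simp [S]
  · rw [S, S, Nat.digits_def' hb hn, List.map_cons, List.sum_cons]
    ring

theorem S_add_mul_add_mul (hb : 1 < b) {r d : ℕ} (hr : r < b) (hd : d < b) (m : ℕ) :
    S c b (r + b * (d + b * m)) = r ^ 2 + d ^ 2 + S c b m := by
  have hb0 : 0 < b := by omega
  rw [S_eq_mod_sq_add hb, S_eq_mod_sq_add hb (_ / b), Nat.add_mul_mod_self_left,
    Nat.mod_eq_of_lt hr, Nat.add_mul_div_left _ _ hb0, Nat.div_eq_of_lt hr, zero_add,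
    Nat.add_mul_mod_self_left, Nat.mod_eq_of_lt hd, Nat.add_mul_div_left _ _ hb0,
    Nat.div_eq_of_lt hd, zero_add, add_assoc]

theorem S_add_mul_add_mul_eq_iff (hb : 1 < b) {r x y : ℕ} (hr : r < b) (hx : x < b) (hy : y < b)
    (hxy : x + y = b) (m : ℕ) :
    S c b (r + b * (x + b * m)) = r + b * (x + b * m) ↔
      S c b (r + b * (y + b * m)) = r + b * (y + b * m) := by
  rw [S_add_mul_add_mul hb hr hx, S_add_mul_add_mul hb hr hy]
  have hswap : x ^ 2 + b * y = y ^ 2 + b * x := by subst hxy; ring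
  constructor <;> intro h <;> linarith

end

theorem stmt_3_general (c b : ℕ) (hb : 2 ≤ b) (a : ℕ)
    (h1 : (a / b) % b ≠ 0) :
    S c b a = a ↔
      S c b (a - ((a / b) % b) * b + (b - (a / b) % b) * b)
        = a - ((a / b) % b) * b + (b - (a / b) % b) * b := by
  have hr : a % b < b := Nat.mod_lt _ (by omega)
  have hx : a / b % b < b := Nat.mod_lt _ (by omega)
  have ha : a = a % b + b * (a / b % b + b * (a / b / b)) := by
    rw [Nat.mod_add_div, Nat.mod_add_div]
  generalize a % b = r, a / b % b = x, a / b / b = m at ha hr hx h1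
  subst ha
  have hswap : r + b * (x + b * m) - x * b + (b - x) * b = r + b * ((b - x) + b * m) := by
    rw [show r + b * (x + b * m) = r + b * (b * m) + x * b by ring, Nat.add_sub_cancel]
    ring
  rw [hswap]
  exact S_add_mul_add_mul_eq_iff hb hr hx (by omega) (by omega) m

theorem stmt_3 (c b : ℕ) (hb : 2 ≤ b) (a : ℕ) (ha : 0 < a)
    (h1 : (a / b) % b ≠ 0) :
    S c b a = a ↔
      S c b (a - ((a / b) % b) * b + (b - (a / b) % b) * b)
        = a - ((a / b) % b) * b + (b - (a / b) % b) * b :=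
  stmt_3_general c b hb a h1
end

section
/- Fix integers c ≥ 0 and b ≥ 2 with b odd. If S_{[c,b]} has a fixed point, then c is even. -/
/-!
Since `x² ≡ x` and an odd base satisfies `b ≡ 1` modulo 2, `S c b a ≡ c + a [MOD 2]`;
a fixed point `a` therefore forces `c + a ≡ a`, i.e. `c` even.
-/

theorem Nat.sq_modEq_self_two (x : ℕ) : x ^ 2 ≡ x [MOD 2] := by
  rcases Nat.mod_two_eq_zero_or_one x with hx | hx <;> simp [Nat.ModEq, Nat.pow_mod, hx]

theorem List.sum_map_sq_modEq_sum_two (L : List ℕ) : (L.map (· ^ 2)).sum ≡ L.sum [MOD 2] := by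
  induction L with
  | nil => rfl
  | cons x xs ih => exact (Nat.sq_modEq_self_two x).add ih

theorem S_modEq_two {b : ℕ} (hb : Odd b) (c a : ℕ) : S c b a ≡ c + a [MOD 2] :=
  ((List.sum_map_sq_modEq_sum_two _).trans
    (Nat.modEq_digits_sum 2 b (Nat.odd_iff.mp hb) a).symm).add_left c

theorem stmt_4_general (c b : ℕ) (hodd : Odd b)
    (h : ∃ a : ℕ, 0 < a ∧ S c b a = a) : Even c := by
  obtain ⟨a, -, hfix⟩ := h
  have hca : c + a ≡ 0 + a [MOD 2] := by
    simpa [hfix] using (S_modEq_two hodd c a).symm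
  exact Nat.even_iff.mpr (Nat.ModEq.add_right_cancel' a hca)

theorem stmt_4 (c b : ℕ) (hb : 2 ≤ b) (hodd : Odd b)
    (h : ∃ a : ℕ, 0 < a ∧ S c b a = a) : Even c :=
  stmt_4_general c b hodd h
end

section
/- Fix integers c ≥ 0 and b ≥ 2 with b even. If a is a fixed point of S_{[c,b]}, then c is congruent modulo 2 to the sum of the base-b digits of a other than the units digit; equivalently, c ≡ D - (a mod b) (mod 2), where D is the sum of all base-b digits of a. -/
theorem List.sum_map_pow_modEq_sum (p : ℕ) [Fact p.Prime] (l : List ℕ) :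
    (l.map (· ^ p)).sum ≡ l.sum [MOD p] := by
  rw [← ZMod.natCast_eq_natCast_iff, Nat.cast_list_sum, Nat.cast_list_sum]
  simp [Function.comp_def, ZMod.pow_card]

theorem S_modEq_add_digits_sum (c b a : ℕ) : S c b a ≡ c + (Nat.digits b a).sum [MOD 2] :=
  (List.sum_map_pow_modEq_sum 2 _).add_left c

theorem stmt_5 (c b : ℕ) (hb : 2 ≤ b) (heven : Even b) (a : ℕ) (ha : 0 < a)
    (hfix : S c b a = a) :
    c ≡ (Nat.digits b a).sum - a % b [MOD 2] := by
  have hdigits : Nat.digits b a = a % b :: Nat.digits b (a / b) := Nat.digits_def' hb ha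
  have hparity : a ≡ c + (Nat.digits b a).sum [MOD 2] := by
    simpa only [hfix] using S_modEq_add_digits_sum c b a
  have hunits : a ≡ a % b [MOD 2] := (Nat.mod_mod_of_dvd a heven.two_dvd).symm
  rw [hdigits, List.sum_cons] at hparity ⊢
  unfold Nat.ModEq at *
  omega
end

section
/- Fix integers c ≥ 0 and b ≥ 2. If there exists an integer α with 1 ≤ α < b/2 and α² - α·b + c = 0, then the set F^(1)_{[c,b]} = {a = u·b : 0 < u < b and S_{[c,b]}(a) = a} has exactly two elements. -/
lemma S_mul_base {c b u : ℕ} (hu : 0 < u) (hub : u < b) : S c b (u * b) = c + u ^ 2 := by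
  rw [S, mul_comm, Nat.digits_base_mul (by omega) hu,
    Nat.digits_of_lt b u hu.ne' hub]
  simp

lemma add_sq_eq_mul_iff_of_root {c b α u : ℕ} (hαb : α ≤ b)
    (hα : (α : ℤ) ^ 2 - α * b + c = 0) :
    c + u ^ 2 = u * b ↔ u = α ∨ u = b - α := by
  have hfactor : ((c + u ^ 2 : ℕ) : ℤ) - (u * b : ℕ) = (u - α) * (u - (b - α : ℕ)) := by
    push_cast [Nat.cast_sub hαb]
    linear_combination hα
  rw [← Nat.cast_inj (R := ℤ), ← sub_eq_zero, hfactor, mul_eq_zero, sub_eq_zero, sub_eq_zero,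
    Nat.cast_inj, Nat.cast_inj]

lemma setOf_fixedPoint_mul_base_eq {c b α : ℕ} (hα1 : 1 ≤ α) (hαb : 2 * α < b)
    (hα : (α : ℤ) ^ 2 - α * b + c = 0) :
    {a : ℕ | ∃ u : ℕ, 0 < u ∧ u < b ∧ a = u * b ∧ S c b a = a} = {α * b, (b - α) * b} := by
  ext a
  simp only [Set.mem_ofPred_eq, Set.mem_insert_iff, Set.mem_singleton_iff]
  constructor
  · rintro ⟨u, hu, hub, rfl, hfix⟩
    rw [S_mul_base hu hub, add_sq_eq_mul_iff_of_root (by omega) hα] at hfix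
    rcases hfix with rfl | rfl <;> simp
  · have hroot {u : ℕ} (hu : u = α ∨ u = b - α) : ∃ v, 0 < v ∧ v < b ∧ u * b = v * b ∧
        S c b (u * b) = u * b := by
      have hu0 : 0 < u := by omega
      have hub : u < b := by omega
      exact ⟨u, hu0, hub, rfl,
        (S_mul_base hu0 hub).trans ((add_sq_eq_mul_iff_of_root (by omega) hα).2 hu)⟩
    rintro (rfl | rfl)
    · exact hroot (.inl rfl)
    · exact hroot (.inr rfl)

theorem stmt_8_general (c b : ℕ)
    (h : ∃ α : ℕ, 1 ≤ α ∧ 2 * α < b ∧ (α : ℤ) ^ 2 - α * b + c = 0) :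
    Set.ncard {a : ℕ | ∃ u : ℕ, 0 < u ∧ u < b ∧ a = u * b ∧ S c b a = a} = 2 := by
  obtain ⟨α, hα1, hαb, hα⟩ := h
  rw [setOf_fixedPoint_mul_base_eq hα1 hαb hα, Set.ncard_pair]
  intro hEq
  have := Nat.eq_of_mul_eq_mul_right (by omega) hEq
  omega

theorem stmt_8 (c b : ℕ) (hb : 2 ≤ b)
    (h : ∃ α : ℕ, 1 ≤ α ∧ 2 * α < b ∧ (α : ℤ) ^ 2 - α * b + c = 0) :
    Set.ncard {a : ℕ | ∃ u : ℕ, 0 < u ∧ u < b ∧ a = u * b ∧ S c b a = a} = 2 :=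
  stmt_8_general c b h
end

section
/- Fix integers c ≥ 0 and b ≥ 2. If b² = 4c, then the set F^(1)_{[c,b]} = {a = u·b : 0 < u < b and S_{[c,b]}(a) = a} has exactly one element. -/
theorem S_mul_base_pow {c b u : ℕ} (n : ℕ) (hb : 1 < b) (hu : 0 < u) :
    S c b (u * b ^ n) = S c b u := by
  simp [S, mul_comm u, Nat.digits_base_pow_mul hb hu]

theorem S_of_lt {c b u : ℕ} (hu : u ≠ 0) (hub : u < b) : S c b u = c + u ^ 2 := by
  simp [S, Nat.digits_of_lt b u hu hub]

theorem add_sq_eq_mul_iff_of_sq_eq {b c u : ℕ} (h : b ^ 2 = 4 * c) :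
    c + u ^ 2 = u * b ↔ 2 * u = b := by
  constructor
  · intro hfix
    have hsq : ((b : ℤ) - 2 * u) ^ 2 = 0 := by
      linear_combination (4 : ℤ) * (by exact_mod_cast hfix : (c : ℤ) + u ^ 2 = u * b) +
        (by exact_mod_cast h : (b : ℤ) ^ 2 = 4 * c)
    have hdiff : (b : ℤ) - 2 * u = 0 := pow_eq_zero_iff two_ne_zero |>.mp hsq
    omega
  · rintro rfl
    nlinarith

theorem S_mul_base_eq_self_iff {c b u : ℕ} (h : b ^ 2 = 4 * c) (hb : 1 < b) (hu : 0 < u)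
    (hub : u < b) : S c b (u * b) = u * b ↔ 2 * u = b := by
  have hS : S c b (u * b) = S c b u := by simpa using S_mul_base_pow 1 hb hu
  rw [hS, S_of_lt hu.ne' hub, add_sq_eq_mul_iff_of_sq_eq h]

theorem stmt_9 (c b : ℕ) (hb : 2 ≤ b) (h : b ^ 2 = 4 * c) :
    Set.ncard {a : ℕ | ∃ u : ℕ, 0 < u ∧ u < b ∧ a = u * b ∧ S c b a = a} = 1 := by
  have heven : 2 ∣ b := Nat.prime_two.dvd_of_dvd_pow (n := 2) ⟨2 * c, by omega⟩
  rw [Set.ncard_eq_one]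
  refine ⟨b / 2 * b, Set.ext fun a => ⟨?_, ?_⟩⟩
  · rintro ⟨u, hu, hub, rfl, hfix⟩
    have hu_half := (S_mul_base_eq_self_iff h hb hu hub).mp hfix
    rw [Set.mem_singleton_iff, ← hu_half]
    congr 1
    omega
  · rintro rfl
    exact ⟨b / 2, by omega, by omega, rfl, (S_mul_base_eq_self_iff h hb (by omega) (by omega)).mpr
      (by omega)⟩
end

section
/- Fix integers c ≥ 0 and b ≥ 2. If b² ≠ 4c and there is no integer α with 1 ≤ α < b/2 and α² - α·b + c = 0, then the set F^(1)_{[c,b]} = {a = u·b : 0 < u < b and S_{[c,b]}(a) = a} is empty. -/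
lemma root_of_S_mul_base_eq {c b u : ℕ} (hu : 0 < u) (hub : u < b)
    (h : S c b (u * b) = u * b) : (u : ℤ) ^ 2 - u * b + c = 0 := by
  rw [S_mul_base hu hub] at h
  have h' : ((c + u ^ 2 : ℕ) : ℤ) = (u * b : ℕ) := congrArg _ h
  push_cast at h'
  linear_combination h'

lemma root_sub_of_root {b c α : ℕ} (hα : α ≤ b) (h : (α : ℤ) ^ 2 - α * b + c = 0) :
    ((b - α : ℕ) : ℤ) ^ 2 - (b - α : ℕ) * b + c = 0 := by
  push_cast [Nat.cast_sub hα]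
  linear_combination h

lemma sq_eq_four_mul_of_root_of_two_mul_eq {b c α : ℕ} (hα : 2 * α = b)
    (h : (α : ℤ) ^ 2 - α * b + c = 0) : b ^ 2 = 4 * c := by
  subst hα
  zify
  push_cast at h ⊢
  linear_combination (-4) * h

theorem stmt_10_general (c b : ℕ) (h1 : b ^ 2 ≠ 4 * c)
    (h2 : ¬ ∃ α : ℕ, 1 ≤ α ∧ 2 * α < b ∧ (α : ℤ) ^ 2 - α * b + c = 0) :
    {a : ℕ | ∃ u : ℕ, 0 < u ∧ u < b ∧ a = u * b ∧ S c b a = a} = ∅ := by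
  refine Set.eq_empty_of_forall_notMem ?_
  rintro _ ⟨u, hu, hub, rfl, hfix⟩
  have hroot := root_of_S_mul_base_eq hu hub hfix
  rcases lt_trichotomy (2 * u) b with hlt | heq | hgt
  · exact h2 ⟨u, hu, hlt, hroot⟩
  · exact h1 (sq_eq_four_mul_of_root_of_two_mul_eq heq hroot)
  · exact h2 ⟨b - u, by omega, by omega, root_sub_of_root hub.le hroot⟩

theorem stmt_10 (c b : ℕ) (hb : 2 ≤ b) (h1 : b ^ 2 ≠ 4 * c)
    (h2 : ¬ ∃ α : ℕ, 1 ≤ α ∧ 2 * α < b ∧ (α : ℤ) ^ 2 - α * b + c = 0) :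
    {a : ℕ | ∃ u : ℕ, 0 < u ∧ u < b ∧ a = u * b ∧ S c b a = a} = ∅ :=
  stmt_10_general c b h1 h2
end

section
/- Fix integers c > 0 and b ≥ 2 with b odd, and suppose b² - 4c + 1 ≥ 0. Then the number of two-digit fixed points of S_{[c,b]} (fixed points a with b ≤ a < b²) equals (1/2)·r₂(b² - 4c + 1) + |F^(1)_{[c,b]}|, where r₂(m) is the number of ordered pairs (x,y) of integers with x² + y² = m. -/
/-- `r2 m` is the number of ordered pairs `(x, y) ∈ ℤ²` with `x² + y² = m`. -/
noncomputable def r2 (m : ℤ) : ℕ := Set.ncard {p : ℤ × ℤ | p.1 ^ 2 + p.2 ^ 2 = m}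

lemma Int.odd_of_sq_add_sq_eq_four_mul_add_two {x y k : ℤ} (h : x ^ 2 + y ^ 2 = 4 * k + 2) :
    Odd x := by
  rcases Int.even_or_odd' x with ⟨s, rfl | rfl⟩
  · rcases Int.even_or_odd' y with ⟨t, rfl | rfl⟩
    · have : 4 * (s ^ 2 + t ^ 2) = 4 * k + 2 := by linear_combination h
      omega
    · have : 4 * (s ^ 2 + t ^ 2 + t) + 1 = 4 * k + 2 := by linear_combination h
      omega
  · exact odd_two_mul_add_one s

lemma Int.exists_nat_eq_two_mul_sub {x b : ℤ} (hxb : Even (x + b)) (hle : -b ≤ x) :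
    ∃ u : ℕ, x = 2 * u - b := by
  obtain ⟨s, hs⟩ := hxb
  exact ⟨s.toNat, by omega⟩

lemma Int.not_isSquare_four_mul_add_two (k : ℤ) : ¬IsSquare (4 * k + 2) := fun ⟨r, hr⟩ ↦
  Int.not_odd_zero <|
    Int.odd_of_sq_add_sq_eq_four_mul_add_two (x := 0) (y := r) (by rw [hr]; ring)

lemma Odd.exists_sq_sub_four_mul_add_one_eq {b : ℕ} (hb : Odd b) (c : ℕ) :
    ∃ k : ℤ, (b : ℤ) ^ 2 - 4 * c + 1 = 4 * k + 2 := by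
  obtain ⟨k, rfl⟩ := hb
  exact ⟨k ^ 2 + k - c, by push_cast; ring⟩

lemma finite_setOf_sq_add_sq_eq (m : ℤ) : {p : ℤ × ℤ | p.1 ^ 2 + p.2 ^ 2 = m}.Finite := by
  refine ((Set.finite_Icc (-m) m).prod (Set.finite_Icc (-m) m)).subset ?_
  rintro ⟨x, y⟩ (h : x ^ 2 + y ^ 2 = m)
  have := Int.natAbs_le_self_sq x
  have := Int.natAbs_le_self_sq y
  refine ⟨⟨?_, ?_⟩, ⟨?_, ?_⟩⟩ <;> simp only <;> nlinarith [sq_nonneg x, sq_nonneg y]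

lemma Int.ne_zero_of_sq_add_sq_eq {m x y : ℤ} (hm : ¬IsSquare m)
    (h : x ^ 2 + y ^ 2 = m) : y ≠ 0 := by
  rintro rfl
  exact hm ⟨x, by rw [← h]; ring⟩

lemma r2_eq_two_mul_ncard_snd_pos {m : ℤ} (hm : ¬IsSquare m) :
    r2 m = 2 * {p : ℤ × ℤ | p.1 ^ 2 + p.2 ^ 2 = m ∧ 0 < p.2}.ncard := by
  set pos := {p : ℤ × ℤ | p.1 ^ 2 + p.2 ^ 2 = m ∧ 0 < p.2}
  set reflect : ℤ × ℤ → ℤ × ℤ := fun p ↦ (p.1, -p.2)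
  have hreflect : reflect '' pos = {p | p.1 ^ 2 + p.2 ^ 2 = m ∧ p.2 < 0} := by
    ext ⟨x, y⟩
    constructor
    · rintro ⟨⟨x', y'⟩, ⟨h, hy⟩, he⟩
      obtain ⟨rfl, rfl⟩ := Prod.mk.inj he
      exact ⟨by rw [neg_sq]; exact h, neg_neg_of_pos hy⟩
    · rintro ⟨h, hy⟩
      exact ⟨(x, -y), ⟨by rw [neg_sq]; exact h, neg_pos_of_neg hy⟩, by simp [reflect]⟩
  have hsplit : {p : ℤ × ℤ | p.1 ^ 2 + p.2 ^ 2 = m} = pos ∪ reflect '' pos := by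
    rw [hreflect]
    ext p
    exact ⟨fun h ↦ (Int.ne_zero_of_sq_add_sq_eq hm h).lt_or_gt.symm.imp (⟨h, ·⟩) (⟨h, ·⟩),
      fun h ↦ h.elim And.left And.left⟩
  have hpos : pos.Finite := (finite_setOf_sq_add_sq_eq m).subset fun p hp ↦ hp.1
  have hdisj : Disjoint pos (reflect '' pos) := by
    rw [hreflect, Set.disjoint_left]
    exact fun p hp hq ↦ (lt_asymm hp.2 hq.2).elim
  have hinj : reflect.Injective := fun p q h ↦ by simpa [reflect, Prod.ext_iff] using h
  rw [r2, hsplit, Set.ncard_union_eq hdisj hpos (hpos.image _),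
    Set.ncard_image_of_injective _ hinj, two_mul]

lemma two_mul_ncard_snd_ge_neg_one {m : ℤ} (hm : ¬IsSquare m) :
    2 * {p : ℤ × ℤ | p.1 ^ 2 + p.2 ^ 2 = m ∧ -1 ≤ p.2}.ncard =
      r2 m + 2 * ({p : ℤ × ℤ | p.1 ^ 2 + p.2 ^ 2 = m ∧ -1 ≤ p.2} ∩ {p | p.2 = -1}).ncard := by
  have hdiff : {p : ℤ × ℤ | p.1 ^ 2 + p.2 ^ 2 = m ∧ -1 ≤ p.2} \ {p | p.2 = -1} =
      {p | p.1 ^ 2 + p.2 ^ 2 = m ∧ 0 < p.2} := by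
    ext ⟨x, y⟩
    constructor
    · rintro ⟨⟨h, hy⟩, hy' : y ≠ -1⟩
      have := Int.ne_zero_of_sq_add_sq_eq hm h
      exact ⟨h, by omega⟩
    · rintro ⟨h, hy⟩
      exact ⟨⟨h, by omega⟩, fun (hy' : y = -1) ↦ by omega⟩
  rw [r2_eq_two_mul_ncard_snd_pos hm, ← hdiff, ← Set.ncard_inter_add_ncard_sdiff_eq_ncard _
    {p : ℤ × ℤ | p.2 = -1} ((finite_setOf_sq_add_sq_eq m).subset fun p hp ↦ hp.1)]
  ring

lemma Nat.le_and_lt_sq_iff {a b : ℕ} : b ≤ a ∧ a < b ^ 2 ↔ 0 < a / b ∧ a / b < b := by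
  rcases b.eq_zero_or_pos with rfl | hb
  · simp
  rw [Nat.div_pos_iff, Nat.div_lt_iff_lt_mul hb, sq]
  exact ⟨fun h ↦ ⟨⟨hb, h.1⟩, h.2⟩, fun h ↦ ⟨h.1.2, h.2⟩⟩

lemma Nat.add_mul_div_left_of_lt {u v b : ℕ} (hv : v < b) : (v + b * u) / b = u := by
  rw [Nat.add_mul_div_left _ _ (by omega), Nat.div_eq_of_lt hv, zero_add]

lemma S_add_mul_s12 {c b u v : ℕ} (hv : v < b) (hu : 0 < u) (hub : u < b) :
    S c b (v + b * u) = c + v ^ 2 + u ^ 2 := by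
  rw [S, Nat.digits_add b (by omega) v u hv (Or.inr hu.ne'), Nat.digits_of_lt b u hu.ne' hub]
  simp [add_assoc]

lemma S_add_mul_eq_self_iff {c b u v : ℕ} (hv : v < b) (hu : 0 < u) (hub : u < b) :
    S c b (v + b * u) = v + b * u ↔
      (2 * u - b : ℤ) ^ 2 + (2 * v - 1 : ℤ) ^ 2 = (b : ℤ) ^ 2 - 4 * c + 1 := by
  rw [S_add_mul_s12 hv hu hub]
  zify
  constructor <;> intro h
  · linear_combination 4 * h
  · linarith

def digitPoint (b a : ℕ) : ℤ × ℤ := (2 * (a / b : ℕ) - b, 2 * (a % b : ℕ) - 1)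

lemma digitPoint_injective (b : ℕ) : (digitPoint b).Injective := by
  intro a a' h
  simp only [digitPoint, Prod.mk.injEq] at h
  have hdiv : a / b = a' / b := by omega
  have hmod : a % b = a' % b := by omega
  rw [← Nat.mod_add_div a b, ← Nat.mod_add_div a' b, hdiv, hmod]

lemma digitPoint_add_mul {b u v : ℕ} (hv : v < b) :
    digitPoint b (v + b * u) = (2 * (u : ℤ) - b, 2 * (v : ℤ) - 1) := by
  rw [digitPoint, Nat.add_mul_div_left_of_lt hv, Nat.add_mul_mod_self_left, Nat.mod_eq_of_lt hv]

lemma image_digitPoint_twoDigitFixedPoints {c b : ℕ} (hc : 0 < c) (hb : Odd b) :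
    digitPoint b '' {a | b ≤ a ∧ a < b ^ 2 ∧ S c b a = a} =
      {p | p.1 ^ 2 + p.2 ^ 2 = (b : ℤ) ^ 2 - 4 * c + 1 ∧ -1 ≤ p.2} := by
  ext p
  constructor
  · rintro ⟨a, ⟨h1, h2, hfix⟩, rfl⟩
    obtain ⟨hu, hub⟩ := Nat.le_and_lt_sq_iff.1 ⟨h1, h2⟩
    have hv : a % b < b := Nat.mod_lt a (by omega)
    rw [← Nat.mod_add_div a b, S_add_mul_eq_self_iff hv hu hub] at hfix
    exact ⟨hfix, by simp only [digitPoint]; omega⟩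
  · obtain ⟨x, y⟩ := p
    rintro ⟨h, hy⟩
    obtain ⟨k, hk⟩ := hb.exists_sq_sub_four_mul_add_one_eq c
    have hx_odd := Int.odd_of_sq_add_sq_eq_four_mul_add_two (h.trans hk)
    have hy_odd := Int.odd_of_sq_add_sq_eq_four_mul_add_two ((add_comm _ _).trans (h.trans hk))
    obtain ⟨hx1, hx2⟩ :=
      abs_lt_of_sq_lt_sq' (a := x) (b := b) (by nlinarith [sq_nonneg y]) (by positivity)
    obtain ⟨hy1, hy2⟩ :=
      abs_lt_of_sq_lt_sq' (a := y) (b := b) (by nlinarith [sq_nonneg x]) (by positivity)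
    obtain ⟨u, rfl⟩ := Int.exists_nat_eq_two_mul_sub
      (hx_odd.add_odd ((Int.odd_coe_nat b).2 hb)) hx1.le
    obtain ⟨v, rfl⟩ := Int.exists_nat_eq_two_mul_sub (b := 1) hy_odd.add_one hy
    have hv : v < b := by omega
    have hu : 0 < u := by omega
    have hub : u < b := by omega
    obtain ⟨h1, h2⟩ := Nat.le_and_lt_sq_iff.2
      (by rw [Nat.add_mul_div_left_of_lt hv]; exact ⟨hu, hub⟩)
    exact ⟨v + b * u, ⟨h1, h2, (S_add_mul_eq_self_iff hv hu hub).2 h⟩, digitPoint_add_mul hv⟩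

lemma setOf_mul_base_fixedPoints_eq {c b : ℕ} :
    {a | ∃ u : ℕ, 0 < u ∧ u < b ∧ a = u * b ∧ S c b a = a} =
      {a | b ≤ a ∧ a < b ^ 2 ∧ S c b a = a} ∩ digitPoint b ⁻¹' {p | p.2 = -1} := by
  ext a
  constructor
  · rintro ⟨u, hu, hub, rfl, hfix⟩
    have hdiv : u * b / b = u := Nat.mul_div_cancel u (by omega)
    obtain ⟨h1, h2⟩ := Nat.le_and_lt_sq_iff.2 (by rw [hdiv]; exact ⟨hu, hub⟩)
    exact ⟨⟨h1, h2, hfix⟩, by simp [digitPoint]⟩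
  · rintro ⟨⟨h1, h2, hfix⟩, hv⟩
    have hmod : a % b = 0 := by
      simp only [digitPoint, Set.mem_preimage, Set.mem_ofPred_eq] at hv
      omega
    obtain ⟨hu, hub⟩ := Nat.le_and_lt_sq_iff.1 ⟨h1, h2⟩
    exact ⟨a / b, hu, hub, (Nat.div_mul_cancel (Nat.dvd_of_mod_eq_zero hmod)).symm, hfix⟩

theorem stmt_12_general (c b : ℕ) (hc : 0 < c) (hodd : Odd b) :
    2 * Set.ncard {a : ℕ | b ≤ a ∧ a < b ^ 2 ∧ S c b a = a} =
      r2 ((b : ℤ) ^ 2 - 4 * c + 1) +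
        2 * Set.ncard {a : ℕ | ∃ u : ℕ, 0 < u ∧ u < b ∧ a = u * b ∧ S c b a = a} := by
  obtain ⟨k, hk⟩ := hodd.exists_sq_sub_four_mul_add_one_eq c
  have hsq : ¬IsSquare ((b : ℤ) ^ 2 - 4 * c + 1) := hk ▸ Int.not_isSquare_four_mul_add_two k
  rw [setOf_mul_base_fixedPoints_eq, ← Set.ncard_image_of_injective _ (digitPoint_injective b),
    ← Set.ncard_image_of_injective _ (digitPoint_injective b), Set.image_inter_preimage,
    image_digitPoint_twoDigitFixedPoints hc hodd]
  exact two_mul_ncard_snd_ge_neg_one hsq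

theorem stmt_12 (c b : ℕ) (hc : 0 < c) (hb : 2 ≤ b) (hodd : Odd b)
    (hpos : 0 ≤ (b : ℤ) ^ 2 - 4 * c + 1) :
    2 * Set.ncard {a : ℕ | b ≤ a ∧ a < b ^ 2 ∧ S c b a = a} =
      r2 ((b : ℤ) ^ 2 - 4 * c + 1) +
        2 * Set.ncard {a : ℕ | ∃ u : ℕ, 0 < u ∧ u < b ∧ a = u * b ∧ S c b a = a} :=
  stmt_12_general c b hc hodd
end

section
/- Fix integers b ≥ 2 and c with 0 < c < 3b - 3, with b even. Then the total number of fixed points of S_{[c,b]} equals (1/4)·r₂(b² - 4c + 1) + |F^(1)_{[c,b]}|. -/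
/-!
Every fixed point of `S c b` has exactly two base-`b` digits: a one-digit `u` would need
`c + u² = u`, and from `b²` on the digit square sum falls short of `a` by at least
`3b - 3 > c`. For `a = b u + v`, completing squares turns `c + u² + v² = b u + v` into
`(2u - b)² + (2v - 1)² = b² - 4c + 1`. The fixed points with `v = 0` form `F^(1)`; the others
correspond to the representations `x² + y²` of this number with `x` even and `y > 0`. As `b`
is even the number is odd, so exactly one of `x, y` is even and `y ≠ 0`; the involutions
`(x, y) ↦ (y, x)` and `(x, y) ↦ (x, -y)` then show that these are a quarter of all
representations.
-/

def sqDigitSum (b a : ℕ) : ℕ := ((Nat.digits b a).map (· ^ 2)).sum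

theorem S_eq_add_sqDigitSum (c b a : ℕ) : S c b a = c + sqDigitSum b a := rfl

section Digits

variable {b : ℕ}

theorem sqDigitSum_eq_mod_add_div (hb : 1 < b) (a : ℕ) :
    sqDigitSum b a = (a % b) ^ 2 + sqDigitSum b (a / b) := by
  rcases Nat.eq_zero_or_pos a with rfl | ha
  · simp [sqDigitSum]
  · simp [sqDigitSum, Nat.digits_def' hb ha]

theorem sqDigitSum_of_lt (hb : 1 < b) {a : ℕ} (ha : a < b) : sqDigitSum b a = a ^ 2 := by
  rw [sqDigitSum_eq_mod_add_div hb, Nat.mod_eq_of_lt ha, Nat.div_eq_of_lt ha]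
  simp [sqDigitSum]

theorem sqDigitSum_add_le (hb : 1 < b) {q : ℕ} (hq : 0 < q) :
    sqDigitSum b q + b ≤ b * q + 1 := by
  induction q using Nat.strong_induction_on with
  | _ q ih =>
  rcases lt_or_ge q b with hqb | hqb
  · rw [sqDigitSum_of_lt hb hqb]
    nlinarith
  · have ih' := ih (q / b) (Nat.div_lt_self hq hb) (Nat.div_pos hqb (by omega))
    have hr : q % b < b := Nat.mod_lt q (by omega)
    rw [sqDigitSum_eq_mod_add_div hb]
    conv_rhs => rw [← Nat.div_add_mod q b]
    nlinarith [Nat.mul_le_mul_right (q % b) hr.le, Nat.mul_le_mul_right (q / b) hb.le]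

theorem sqDigitSum_add_le_of_sq_le (hb : 1 < b) {a : ℕ} (ha : b ^ 2 ≤ a) :
    sqDigitSum b a + 3 * b ≤ a + 3 := by
  have hq : 0 < a / b / b := by
    rw [Nat.div_div_eq_div_mul, ← sq]
    exact Nat.div_pos ha (by positivity)
  have key := sqDigitSum_add_le hb hq
  have hr₁ : a % b < b := Nat.mod_lt a (by omega)
  have hr₂ : a / b % b < b := Nat.mod_lt _ (by omega)
  rw [sqDigitSum_eq_mod_add_div hb, sqDigitSum_eq_mod_add_div hb (a / b)]
  conv_rhs => rw [← Nat.div_add_mod a b, ← Nat.div_add_mod (a / b) b]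
  -- `a = b² q + b r₂ + r₁`; the gap comes from `r₁² - r₁ ≤ (b - 1)(b - 2)` and `r₂² ≤ b r₂`.
  generalize a / b / b = q, a / b % b = r₂, a % b = r₁ at *
  zify at *
  nlinarith [mul_nonneg (by omega : (0 : ℤ) ≤ b - 1 - r₁) (by omega : (0 : ℤ) ≤ r₁ + b - 2),
    mul_nonneg (by omega : (0 : ℤ) ≤ r₂) (by omega : (0 : ℤ) ≤ b - r₂),
    mul_nonneg (by omega : (0 : ℤ) ≤ q - 1) (by nlinarith : (0 : ℤ) ≤ b ^ 2 - b)]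

end Digits

section FixedPoints

variable {c b : ℕ}

theorem le_and_lt_sq_of_S_eq_self (hb : 1 < b) (hc : 0 < c) (hcb : c + 3 < 3 * b) {a : ℕ}
    (hfix : S c b a = a) : b ≤ a ∧ a < b ^ 2 := by
  rw [S_eq_add_sqDigitSum] at hfix
  constructor
  · by_contra! h
    rw [sqDigitSum_of_lt hb h] at hfix
    nlinarith
  · by_contra! h
    have := sqDigitSum_add_le_of_sq_le hb h
    omega

theorem S_eq_self_iff_of_lt_sq (hb : 1 < b) {a : ℕ} (ha : a < b ^ 2) :
    S c b a = a ↔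
      (2 * ((a / b : ℕ) : ℤ) - b) ^ 2 + (2 * ((a % b : ℕ) : ℤ) - 1) ^ 2 = b ^ 2 - 4 * c + 1 := by
  have hdiv : a / b < b := Nat.div_lt_of_lt_mul (by rwa [← sq])
  have hsplit : ((b * (a / b) + a % b : ℕ) : ℤ) = a := by rw [Nat.div_add_mod]
  rw [S_eq_add_sqDigitSum, sqDigitSum_eq_mod_add_div hb, sqDigitSum_of_lt hb hdiv,
    ← Int.natCast_inj, ← hsplit]
  push_cast
  constructor <;> intro h <;> linarith

end FixedPoints

theorem Set.ncard_union_preimage_of_involutive {α : Type*} {t : Set α} {f : α → α}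
    (hf : Function.Involutive f) (hd : Disjoint t (f ⁻¹' t)) :
    (t ∪ f ⁻¹' t).ncard = 2 * t.ncard := by
  rw [Set.ncard_def, Set.ncard_def, Set.encard_union_eq hd, ← hf.image_eq_preimage_symm,
    hf.injective.encard_image, ← two_mul, ENat.toNat_mul]
  rfl

theorem even_iff_odd_of_odd_sq_add_sq {x y : ℤ} (h : Odd (x ^ 2 + y ^ 2)) :
    Even x ↔ Odd y := by
  rw [← Int.not_even_iff_odd, Int.even_add, Int.even_pow' two_ne_zero,
    Int.even_pow' two_ne_zero] at h
  rw [← Int.not_even_iff_odd]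
  tauto

theorem r2_eq_four_mul_ncard {m : ℤ} (hm : Odd m) :
    r2 m = 4 * {p : ℤ × ℤ | p.1 ^ 2 + p.2 ^ 2 = m ∧ Even p.1 ∧ 0 < p.2}.ncard := by
  set T₁ := {p : ℤ × ℤ | p.1 ^ 2 + p.2 ^ 2 = m ∧ Even p.1}
  set T₂ := {p : ℤ × ℤ | p.1 ^ 2 + p.2 ^ 2 = m ∧ Even p.1 ∧ 0 < p.2}
  have hpar {x y : ℤ} (h : x ^ 2 + y ^ 2 = m) : Even x ↔ Odd y :=
    even_iff_odd_of_odd_sq_add_sq (h ▸ hm)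
  have hswap : {p : ℤ × ℤ | p.1 ^ 2 + p.2 ^ 2 = m} = T₁ ∪ Prod.swap ⁻¹' T₁ := by
    ext ⟨x, y⟩
    simp only [T₁, Set.mem_union, Set.mem_ofPred_eq, Set.mem_preimage, Prod.fst_swap,
      Prod.snd_swap, add_comm (y ^ 2)]
    refine ⟨fun h => ?_, by rintro (⟨h, -⟩ | ⟨h, -⟩) <;> exact h⟩
    rcases Int.even_or_odd x with hx | hx
    · exact .inl ⟨h, hx⟩
    · exact .inr ⟨h, Int.not_odd_iff_even.mp (mt (hpar h).mpr (Int.not_even_iff_odd.mpr hx))⟩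
  have hneg : T₁ = T₂ ∪ (fun p : ℤ × ℤ => (p.1, -p.2)) ⁻¹' T₂ := by
    ext ⟨x, y⟩
    simp only [T₁, T₂, Set.mem_union, Set.mem_ofPred_eq, Set.mem_preimage, neg_sq, neg_pos]
    refine ⟨fun ⟨h, hx⟩ => ?_, by rintro (⟨h, hx, -⟩ | ⟨h, hx, -⟩) <;> exact ⟨h, hx⟩⟩
    have hy : y ≠ 0 := by rintro rfl; exact Int.not_odd_zero ((hpar h).mp hx)
    rcases hy.lt_or_gt with hy | hy
    · exact .inr ⟨h, hx, hy⟩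
    · exact .inl ⟨h, hx, hy⟩
  rw [r2, hswap, Set.ncard_union_preimage_of_involutive Prod.swap_swap, hneg,
    Set.ncard_union_preimage_of_involutive (fun p => by simp)]
  · ring
  · rw [Set.disjoint_left]
    rintro ⟨x, y⟩ ⟨-, -, hy⟩ ⟨-, -, hy'⟩
    simp only at hy'
    omega
  · rw [Set.disjoint_left]
    rintro ⟨x, y⟩ ⟨h, hx⟩ ⟨-, hy⟩
    exact Int.not_even_iff_odd.mpr ((hpar h).mp hx) hy

section Counting

variable {c b : ℕ}

theorem odd_sq_sub_four_mul_add_one (heven : Even b) : Odd ((b : ℤ) ^ 2 - 4 * c + 1) := by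
  obtain ⟨k, rfl⟩ := heven
  exact ⟨2 * k ^ 2 - 2 * c, by push_cast; ring⟩

theorem ncard_fixedPoints_eq_add (hb : 1 < b) (hc : 0 < c) (hcb : c + 3 < 3 * b) :
    {a : ℕ | 0 < a ∧ S c b a = a}.ncard =
      {a : ℕ | ∃ u : ℕ, 0 < u ∧ u < b ∧ a = u * b ∧ S c b a = a}.ncard +
        {a : ℕ | S c b a = a ∧ ¬ b ∣ a}.ncard := by
  have hfin : {a : ℕ | 0 < a ∧ S c b a = a}.Finite :=
    (Set.finite_Iio (b ^ 2)).subset fun a ha => (le_and_lt_sq_of_S_eq_self hb hc hcb ha.2).2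
  rw [← Set.ncard_inter_add_ncard_sdiff_eq_ncard _ {a | b ∣ a} hfin]
  congr 1 <;> congr 1 <;> ext a <;>
    simp only [Set.mem_inter_iff, Set.mem_sdiff, Set.mem_ofPred_eq]
  · constructor
    · rintro ⟨⟨-, hfix⟩, hdvd⟩
      obtain ⟨hba, hab⟩ := le_and_lt_sq_of_S_eq_self hb hc hcb hfix
      refine ⟨a / b, Nat.div_pos hba (by omega), Nat.div_lt_of_lt_mul (by rwa [← sq]), ?_, hfix⟩
      exact (Nat.div_mul_cancel hdvd).symm
    · rintro ⟨u, hu, -, rfl, hfix⟩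
      exact ⟨⟨by positivity, hfix⟩, dvd_mul_left b u⟩
  · constructor
    · rintro ⟨⟨-, hfix⟩, hdvd⟩
      exact ⟨hfix, hdvd⟩
    · rintro ⟨hfix, hdvd⟩
      exact ⟨⟨Nat.pos_of_ne_zero (by rintro rfl; exact hdvd (dvd_zero b)), hfix⟩, hdvd⟩

theorem exists_S_eq_self_of_sq_add_sq (hb : 1 < b) (heven : Even b) (hc : 0 < c) {x y : ℤ}
    (h : x ^ 2 + y ^ 2 = b ^ 2 - 4 * c + 1) (hx : Even x) (hy : 0 < y) :
    ∃ a : ℕ, (S c b a = a ∧ ¬ b ∣ a) ∧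
      (2 * ((a / b : ℕ) : ℤ) - b, 2 * ((a % b : ℕ) : ℤ) - 1) = (x, y) := by
  have hy' : Odd y :=
    (even_iff_odd_of_odd_sq_add_sq (h ▸ odd_sq_sub_four_mul_add_one heven)).1 hx
  obtain ⟨hx₁, hx₂⟩ := abs_lt_of_sq_lt_sq' (show x ^ 2 < (b : ℤ) ^ 2 by nlinarith) (by positivity)
  obtain ⟨-, hy₂⟩ := abs_lt_of_sq_lt_sq' (show y ^ 2 < (b : ℤ) ^ 2 by nlinarith) (by positivity)
  obtain ⟨k, rfl⟩ := heven
  obtain ⟨s, rfl⟩ := hx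
  obtain ⟨t, rfl⟩ := hy'
  obtain ⟨u, hu⟩ : ∃ u : ℕ, (u : ℤ) = s + k := ⟨(s + k).toNat, by omega⟩
  obtain ⟨v, hv⟩ : ∃ v : ℕ, (v : ℤ) = t + 1 := ⟨(t + 1).toNat, by omega⟩
  have hub : u < k + k := by omega
  have hvb : v < k + k := by omega
  have hdiv : ((k + k) * u + v) / (k + k) = u := by
    rw [Nat.mul_add_div (by omega), Nat.div_eq_of_lt hvb, add_zero]
  have hmod : ((k + k) * u + v) % (k + k) = v := by
    rw [Nat.mul_add_mod, Nat.mod_eq_of_lt hvb]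
  have hlt : (k + k) * u + v < (k + k) ^ 2 := by nlinarith
  refine ⟨(k + k) * u + v, ⟨?_, ?_⟩, ?_⟩
  · rw [S_eq_self_iff_of_lt_sq hb hlt, hdiv, hmod, hu, hv]
    push_cast at h ⊢
    linarith
  · rw [Nat.dvd_iff_mod_eq_zero, hmod]
    omega
  · rw [hdiv, hmod]
    push_cast
    ext <;> simp only <;> omega

theorem ncard_fixedPoints_not_dvd (hb : 1 < b) (heven : Even b) (hc : 0 < c)
    (hcb : c + 3 < 3 * b) :
    {a : ℕ | S c b a = a ∧ ¬ b ∣ a}.ncard =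
      {p : ℤ × ℤ | p.1 ^ 2 + p.2 ^ 2 = b ^ 2 - 4 * c + 1 ∧ Even p.1 ∧ 0 < p.2}.ncard := by
  refine Set.ncard_congr (fun a _ => (2 * ((a / b : ℕ) : ℤ) - b, 2 * ((a % b : ℕ) : ℤ) - 1))
    ?_ ?_ ?_
  · rintro a ⟨hfix, hdvd⟩
    have hmod : a % b ≠ 0 := fun h => hdvd (Nat.dvd_of_mod_eq_zero h)
    exact ⟨(S_eq_self_iff_of_lt_sq hb (le_and_lt_sq_of_S_eq_self hb hc hcb hfix).2).1 hfix,
      (even_two_mul _).sub (Int.even_coe_nat b |>.2 heven), by omega⟩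
  · intro a a' _ _ h
    simp only [Prod.mk.injEq] at h
    have hdiv : a / b = a' / b := by omega
    have hmod : a % b = a' % b := by omega
    rw [← Nat.div_add_mod a b, hdiv, hmod, Nat.div_add_mod]
  · rintro ⟨x, y⟩ ⟨h, hx, hy⟩
    obtain ⟨a, ha, hp⟩ := exists_S_eq_self_of_sq_add_sq hb heven hc h hx hy
    exact ⟨a, ha, hp⟩

end Counting

theorem stmt_15 (c b : ℕ) (hb : 2 ≤ b) (heven : Even b)
    (hc1 : 0 < c) (hc2 : c < 3 * b - 3) :
    4 * Set.ncard {a : ℕ | 0 < a ∧ S c b a = a} =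
      r2 ((b : ℤ) ^ 2 - 4 * c + 1) +
        4 * Set.ncard {a : ℕ | ∃ u : ℕ, 0 < u ∧ u < b ∧ a = u * b ∧ S c b a = a} := by
  have hcb : c + 3 < 3 * b := by omega
  rw [ncard_fixedPoints_eq_add hb hc1 hcb,
    r2_eq_four_mul_ncard (odd_sq_sub_four_mul_add_one heven),
    ← ncard_fixedPoints_not_dvd hb heven hc1 hcb]
  ring
end

section
/- Fix integers c ≥ 0, b ≥ 2, and n ≥ 2. If S_{[c,b]} has a fixed point a with n + 1 base-b digits (that is, b^n ≤ a < b^{n+1}), then m_{b,n} ≤ c ≤ M_{b,n}, where m_{b,n} = b^n - b² + 3b - 3 and M_{b,n} = b^{n+1} - b² - (n-1)(b-1)² + (b - ⌊b/2⌋)·⌊b/2⌋. -/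
open Finset

namespace Nat

theorem sum_range_div_pow_mod_mul_pow {b m a : ℕ} (ha : a < b ^ m) :
    ∑ i ∈ range m, a / b ^ i % b * b ^ i = a := by
  induction m generalizing a with
  | zero => simp_all
  | succ m ih =>
    have hb : 0 < b := Nat.pos_of_ne_zero fun h => by simp [h] at ha
    have hdiv : a / b < b ^ m := Nat.div_lt_of_lt_mul (by rwa [← pow_succ'])
    calc ∑ i ∈ range (m + 1), a / b ^ i % b * b ^ i
        = b * ∑ i ∈ range m, a / b / b ^ i % b * b ^ i + a % b := by
          simp only [sum_range_succ', mul_sum, pow_succ', Nat.div_div_eq_div_mul]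
          simp only [pow_zero, Nat.div_one, mul_one]
          congr 1
          exact sum_congr rfl fun i _ => by ring
      _ = a := by rw [ih hdiv, Nat.div_add_mod]

theorem sum_map_digits_eq_sum_range {M : Type*} [AddCommMonoid M] {b : ℕ} (hb : 1 < b)
    (f : ℕ → M) (hf : f 0 = 0) {m a : ℕ} (ha : a < b ^ m) :
    ((digits b a).map f).sum = ∑ i ∈ range m, f (a / b ^ i % b) := by
  induction m generalizing a with
  | zero => simp_all
  | succ m ih =>
    rcases eq_or_ne a 0 with rfl | ha0
    · simp [hf]
    have hdiv : a / b < b ^ m := Nat.div_lt_of_lt_mul (by rwa [← pow_succ'])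
    rw [digits_eq_cons_digits_div hb ha0, List.map_cons, List.sum_cons, ih hdiv,
      sum_range_succ', add_comm]
    simp only [pow_succ', Nat.div_div_eq_div_mul, pow_zero, Nat.div_one]

end Nat

theorem S_eq_self_iff {c b m a : ℕ} (hb : 1 < b) (ha : a < b ^ m) :
    S c b a = a ↔
      (c : ℤ) = ∑ i ∈ range m, ((a / b ^ i % b : ℕ) : ℤ) * (b ^ i - (a / b ^ i % b : ℕ)) := by
  have hsq := Nat.sum_map_digits_eq_sum_range hb (· ^ 2) (zero_pow two_ne_zero) ha
  have ha' := congrArg (Nat.cast : ℕ → ℤ) (Nat.sum_range_div_pow_mod_mul_pow ha)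
  rw [S, hsq, ← Nat.cast_inj (R := ℤ)]
  simp only [mul_sub, sum_sub_distrib, ← sq, Nat.cast_add, Nat.cast_sum, Nat.cast_mul,
    Nat.cast_pow] at ha' ⊢
  constructor <;> intro h <;> linarith

namespace Int

theorem mul_sub_self_le_of_le {d m x : ℤ} (hd : d ≤ m) (hm : 2 * m ≤ x) :
    d * (x - d) ≤ m * (x - m) := by
  nlinarith

theorem mul_sub_self_le_of_le_of_le {l d x : ℤ} (hl : l ≤ d) (hd : d ≤ x - l) :
    l * (x - l) ≤ d * (x - d) := by
  nlinarith

theorem mul_sub_self_le_div_two (d x : ℤ) : d * (x - d) ≤ (x - x / 2) * (x / 2) := by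
  have hx := Int.mul_ediv_add_emod x 2
  generalize x / 2 = h at hx ⊢
  rcases Int.emod_two_eq x with hr | hr <;> rw [hr] at hx <;> subst hx
  · nlinarith [sq_nonneg (d - h)]
  · nlinarith [Int.le_self_sq (d - h)]

end Int

theorem sum_range_sub_one_mul_pow_add_two {R : Type*} [CommRing R] (b : R) (k : ℕ) :
    ∑ i ∈ range (k + 1), (b - 1) * (b ^ (i + 2) - (b - 1)) =
      b ^ (k + 3) - b ^ 2 - (k + 1) * (b - 1) ^ 2 := by
  induction k with
  | zero => rw [sum_range_one]; push_cast; ring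
  | succ k ih => rw [sum_range_succ, ih]; push_cast; ring

section DigitSums

variable {b : ℤ} {d : ℕ → ℤ}

theorem le_sum_range_mul_pow_sub (hb : 2 ≤ b) (hd : ∀ i, 0 ≤ d i ∧ d i ≤ b - 1) {k : ℕ}
    (htop : 1 ≤ d (k + 2)) :
    b ^ (k + 2) - b ^ 2 + 3 * b - 3 ≤ ∑ i ∈ range (k + 3), d i * (b ^ i - d i) := by
  have hpow (i : ℕ) : b ≤ b ^ (i + 1) :=
    le_self_pow₀ (by linarith) (Nat.succ_ne_zero i)
  -- `2 - b` is the reflection of `b - 1` in the vertex `1 / 2` of `t ↦ t * (1 - t)`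
  have h0 : (2 - b) * (1 - (2 - b)) ≤ d 0 * (1 - d 0) :=
    Int.mul_sub_self_le_of_le_of_le (by linarith [hd 0]) (by linarith [hd 0])
  have h1 : 0 * (b - 0) ≤ d 1 * (b - d 1) :=
    Int.mul_sub_self_le_of_le_of_le (hd 1).1 (by linarith [hd 1])
  have hmid : 0 ≤ ∑ i ∈ range k, d (i + 2) * (b ^ (i + 2) - d (i + 2)) :=
    sum_nonneg fun i _ => by
      simpa using Int.mul_sub_self_le_of_le_of_le (x := b ^ (i + 2)) (hd (i + 2)).1
        (by linarith [hd (i + 2), hpow (i + 1)])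
  have h2 : 1 * (b ^ (k + 2) - 1) ≤ d (k + 2) * (b ^ (k + 2) - d (k + 2)) :=
    Int.mul_sub_self_le_of_le_of_le (x := b ^ (k + 2)) htop
      (by linarith [hd (k + 2), hpow (k + 1)])
  rw [sum_range_succ, sum_range_succ', sum_range_succ']
  simp only [add_assoc, Nat.reduceAdd, zero_add, pow_zero, pow_one]
  linarith

theorem sum_range_mul_pow_sub_le (hb : 1 ≤ b) (hd : ∀ i, d i ≤ b - 1) (k : ℕ) :
    ∑ i ∈ range (k + 3), d i * (b ^ i - d i) ≤
      b ^ (k + 3) - b ^ 2 - (k + 1) * (b - 1) ^ 2 + (b - b / 2) * (b / 2) := by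
  have h0 : d 0 * (1 - d 0) ≤ 0 := by nlinarith [Int.le_self_sq (d 0)]
  have h1 := Int.mul_sub_self_le_div_two (d 1) b
  have hmid : ∑ i ∈ range (k + 1), d (i + 2) * (b ^ (i + 2) - d (i + 2)) ≤
      ∑ i ∈ range (k + 1), (b - 1) * (b ^ (i + 2) - (b - 1)) :=
    sum_le_sum fun i _ => Int.mul_sub_self_le_of_le (hd (i + 2))
      (by nlinarith [pow_le_pow_right₀ hb (Nat.le_add_left 2 i)])
  rw [sum_range_sub_one_mul_pow_add_two] at hmid
  rw [sum_range_succ', sum_range_succ']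
  simp only [add_assoc, Nat.reduceAdd, zero_add, pow_zero, pow_one]
  linarith

end DigitSums

theorem stmt_16 (c b n : ℕ) (hb : 2 ≤ b) (hn : 2 ≤ n) (a : ℕ)
    (ha1 : b ^ n ≤ a) (ha2 : a < b ^ (n + 1)) (hfix : S c b a = a) :
    (b : ℤ) ^ n - (b : ℤ) ^ 2 + 3 * b - 3 ≤ (c : ℤ) ∧
      (c : ℤ) ≤ (b : ℤ) ^ (n + 1) - (b : ℤ) ^ 2 - ((n : ℤ) - 1) * ((b : ℤ) - 1) ^ 2 +
        ((b : ℤ) - ((b / 2 : ℕ) : ℤ)) * ((b / 2 : ℕ) : ℤ) := by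
  obtain ⟨k, rfl⟩ : ∃ k, n = k + 2 := ⟨n - 2, by omega⟩
  rw [S_eq_self_iff (by omega) ha2] at hfix
  have hd (i : ℕ) : 0 ≤ ((a / b ^ i % b : ℕ) : ℤ) ∧ ((a / b ^ i % b : ℕ) : ℤ) ≤ b - 1 := by
    have := Nat.mod_lt (a / b ^ i) (by omega : 0 < b)
    omega
  have htop : 1 ≤ ((a / b ^ (k + 2) % b : ℕ) : ℤ) := by
    have hlo : 1 ≤ a / b ^ (k + 2) := (Nat.one_le_div_iff (by positivity)).2 ha1
    have hhi : a / b ^ (k + 2) < b := Nat.div_lt_of_lt_mul (by rwa [← pow_succ])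
    rw [Nat.mod_eq_of_lt hhi]
    exact_mod_cast hlo
  rw [hfix, Int.natCast_div, Nat.cast_ofNat]
  refine ⟨le_sum_range_mul_pow_sub (by exact_mod_cast hb) hd htop, ?_⟩
  convert sum_range_mul_pow_sub_le (by omega) (fun i => (hd i).2) k using 2
  push_cast
  ring
end
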